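/- Let u(a,b) := ∫_{−1}^{1} √(a + bs)·(s+1)^{3/2} ds for (a,b) with |b| ≤ a. Fix x > 0 and r ∈ (−1, 0]. Then every (a,b) with |b| ≤ a and a + br = x·(1+r) satisfies a ≤ x, and consequently u(a,b) ≤ u(x,x). In other words, every price r ∈ (−1, 0] is a marginal utility-based price at the boundary endowment (x,x). -/

import Mathlib

/-!
By concavity of `√`, `√(a + b s) ≤ √y + (a + b s - y) / (2 √y)` with `y = x (1 + s)`, the
value of the integrand at `(x, x)`. Integrating against `(s + 1)^{3/2}` gives the supergradient
inequality `u(a, b) ≤ u(x, x) + ((a - x) + (b - x) / 3) / √x`. The budget constraint with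
`r ∈ (-1, 0]` and `|b| ≤ a` forces `b ≤ a ≤ x`, so the correction term is nonpositive.
-/

open Real intervalIntegral

noncomputable def sqrtClaimUtility (a b : ℝ) : ℝ :=
  ∫ s in (-1 : ℝ)..1, √(a + b * s) * (s + 1) ^ ((3 : ℝ) / 2)

lemma rpow_three_halves {t : ℝ} (ht : 0 ≤ t) : t ^ ((3 : ℝ) / 2) = √t * t := by
  rw [show (3 : ℝ) / 2 = 1 / 2 + 1 by norm_num, rpow_add' ht (by norm_num), rpow_one,
    sqrt_eq_rpow]

lemma add_mul_nonneg_of_abs_le {a b s : ℝ} (hab : |b| ≤ a) (hs : s ∈ Set.Icc (-1 : ℝ) 1) :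
    0 ≤ a + b * s := by
  obtain ⟨hs₁, hs₂⟩ := hs
  obtain ⟨hb₁, hb₂⟩ := abs_le.mp hab
  nlinarith [mul_nonneg (by linarith : 0 ≤ a + b) (by linarith : 0 ≤ s + 1),
    mul_nonneg (by linarith : 0 ≤ a - b) (by linarith : 0 ≤ 1 - s)]

/-- AM-GM in the form `√p ≤ (p + x t) / (2 √(x t))`, multiplied through by `t ^ (3/2)`. -/
lemma sqrt_mul_rpow_three_halves_le {p t x : ℝ} (hp : 0 ≤ p) (ht : 0 ≤ t) (hx : 0 < x) :
    √p * t ^ ((3 : ℝ) / 2) ≤ (p + x * t) * t / (2 * √x) := by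
  have amgm : 2 * √x * (√p * √t) ≤ p + x * t := by
    nlinarith [sq_nonneg (√p - √x * √t), sq_sqrt hp, sq_sqrt ht, sq_sqrt hx.le]
  rw [rpow_three_halves ht, le_div_iff₀ (by positivity)]
  nlinarith [mul_le_mul_of_nonneg_right amgm ht]

lemma integral_add_one_pow (n : ℕ) :
    ∫ s in (-1 : ℝ)..1, (s + 1) ^ n = 2 ^ (n + 1) / (n + 1) := by
  rw [integral_comp_add_right (fun s => s ^ n), integral_pow]
  norm_num

lemma sqrtClaimUtility_diag {x : ℝ} (hx : 0 ≤ x) : sqrtClaimUtility x x = 8 / 3 * √x := by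
  have hcongr : Set.EqOn (fun s => √(x + x * s) * (s + 1) ^ ((3 : ℝ) / 2))
      (fun s => √x * (s + 1) ^ 2) (Set.uIcc (-1) 1) := by
    intro s hs
    rw [Set.uIcc_of_le (by norm_num)] at hs
    have hs₁ : 0 ≤ s + 1 := by linarith [hs.1]
    simp only
    rw [rpow_three_halves hs₁, show x + x * s = x * (s + 1) by ring, sqrt_mul hx]
    linear_combination (√x * (s + 1)) * mul_self_sqrt hs₁
  rw [sqrtClaimUtility, integral_congr hcongr, integral_const_mul, integral_add_one_pow]
  norm_num
  ring

/-- The supergradient inequality of the concave function `sqrtClaimUtility` at the boundary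
point `(x, x)`, where its gradient is `(1, 1/3) / √x`. -/
lemma sqrtClaimUtility_le_diag_add {a b x : ℝ} (hab : |b| ≤ a) (hx : 0 < x) :
    sqrtClaimUtility a b ≤ sqrtClaimUtility x x + (a - x + (b - x) / 3) / √x := by
  have hbound : ∀ s ∈ Set.Icc (-1 : ℝ) 1, √(a + b * s) * (s + 1) ^ ((3 : ℝ) / 2) ≤
      ((a - b) * (s + 1) + (b + x) * (s + 1) ^ 2) / (2 * √x) := by
    intro s hs
    have h := sqrt_mul_rpow_three_halves_le (add_mul_nonneg_of_abs_le hab hs)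
      (by linarith [hs.1] : 0 ≤ s + 1) hx
    convert h using 2
    ring
  have hcont : Continuous fun s : ℝ => (s + 1) ^ ((3 : ℝ) / 2) :=
    continuous_iff_continuousAt.2 fun s =>
      (continuousAt_rpow_const _ _ (Or.inr (by norm_num))).comp (by fun_prop)
  have hint : IntervalIntegrable (fun s => √(a + b * s) * (s + 1) ^ ((3 : ℝ) / 2))
      MeasureTheory.volume (-1) 1 :=
    ((continuous_sqrt.comp (continuous_const.add (continuous_const.mul continuous_id))).mul
      hcont).intervalIntegrable _ _
  calc sqrtClaimUtility a b
      ≤ ∫ s in (-1 : ℝ)..1, ((a - b) * (s + 1) + (b + x) * (s + 1) ^ 2) / (2 * √x) :=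
        integral_mono_on (by norm_num) hint
          (by apply Continuous.intervalIntegrable; fun_prop) hbound
    _ = sqrtClaimUtility x x + (a - x + (b - x) / 3) / √x := by
        have h1 := integral_add_one_pow 1
        have h2 := integral_add_one_pow 2
        simp only [pow_one] at h1
        rw [integral_div, integral_add, integral_const_mul, integral_const_mul, h1, h2,
          sqrtClaimUtility_diag hx.le]
        · field_simp
          rw [sq_sqrt hx.le]
          ring
        all_goals apply Continuous.intervalIntegrable; fun_prop

lemma le_of_add_mul_eq_mul_one_add {a b x r : ℝ} (hab : |b| ≤ a) (hr : r ∈ Set.Ioc (-1 : ℝ) 0)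
    (h : a + b * r = x * (1 + r)) : a ≤ x := by
  nlinarith [hr.1, mul_nonneg (sub_nonneg.2 (abs_le.mp hab).2) (neg_nonneg.2 hr.2)]

theorem stmt9 (u : ℝ → ℝ → ℝ)
    (hu : ∀ a b : ℝ, u a b = ∫ s in (-1 : ℝ)..1, Real.sqrt (a + b * s) * (s + 1) ^ ((3 : ℝ) / 2))
    (x : ℝ) (hx : 0 < x) (r : ℝ) (hr : r ∈ Set.Ioc (-1 : ℝ) 0) :
    ∀ a b : ℝ, |b| ≤ a → a + b * r = x * (1 + r) → a ≤ x ∧ u a b ≤ u x x := by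
  intro a b hab hbudget
  have hax : a ≤ x := le_of_add_mul_eq_mul_one_add hab hr hbudget
  have hbx : b ≤ x := (le_abs_self b).trans (hab.trans hax)
  have hgain : (a - x + (b - x) / 3) / √x ≤ 0 :=
    div_nonpos_of_nonpos_of_nonneg (by linarith) (sqrt_nonneg x)
  refine ⟨hax, ?_⟩
  rw [hu, hu]
  exact (sqrtClaimUtility_le_diag_add hab hx).trans (add_le_of_nonpos_right hgain)
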